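/- arXiv:2101.12695 — 12 statements merged into one kernel-verified Lean document; each statement's English description precedes it below -/
import Mathlib

section
/- For a distribution function F on [0,∞) with F(0-)=0 and α>0, the tail of the Williamson transform satisfies 1-G_F(x) = α x^{-α} ∫_0^x t^{α-1}(1-F(t))dt for all x>0. -/
open MeasureTheory Filter Topology Real Set

/-!
Off `{X ≤ x}` the variable `(min X x / x) ^ α` equals `1`, and on it `(X / x) ^ α`, so the left-hand
side is `x ^ (-α) * E[min X x ^ α]`. The layer cake formula writes this moment as
`α * ∫ t in 0..∞, t ^ (α - 1) * P(min X x > t)`, and `P(min X x > t)` is `P(X > t) = 1 - F t`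
for `t < x` and vanishes for `t ≥ x`.
-/

section LayerCake

variable {Ω : Type*} [MeasurableSpace Ω] {μ : Measure Ω} {f : Ω → ℝ} {p c : ℝ}

theorem lintegral_min_rpow_eq_lintegral_meas_lt_mul (hf0 : 0 ≤ᵐ[μ] f)
    (hf : AEMeasurable f μ) (hp : 0 < p) (hc : 0 ≤ c) :
    ∫⁻ ω, ENNReal.ofReal (min (f ω) c ^ p) ∂μ =
      ENNReal.ofReal p * ∫⁻ t in Ioo 0 c, μ {ω | t < f ω} * ENNReal.ofReal (t ^ (p - 1)) := by
  have hmin0 : 0 ≤ᵐ[μ] fun ω ↦ min (f ω) c := by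
    filter_upwards [hf0] with ω hω using le_min hω hc
  rw [lintegral_rpow_eq_lintegral_meas_lt_mul μ hmin0 (hf.min aemeasurable_const) hp,
    ← Ioi_inter_Iio, inter_comm, ← Measure.restrict_restrict measurableSet_Iio,
    ← lintegral_indicator measurableSet_Iio]
  congr 2 with t
  by_cases htc : t < c <;> simp [htc]

theorem integral_min_rpow_eq_intervalIntegral [IsFiniteMeasure μ] (hf0 : 0 ≤ᵐ[μ] f)
    (hf : AEMeasurable f μ) (hp : 0 < p) (hc : 0 ≤ c) :
    ∫ ω, min (f ω) c ^ p ∂μ = p * ∫ t in 0..c, t ^ (p - 1) * μ.real {ω | t < f ω} := by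
  set tail : ℝ → ℝ := fun t ↦ t ^ (p - 1) * μ.real {ω | t < f ω}
  have hmin_nn : 0 ≤ᵐ[μ] fun ω ↦ min (f ω) c ^ p := by
    filter_upwards [hf0] with ω hω using rpow_nonneg (le_min hω hc) _
  have hmin_int : Integrable (fun ω ↦ min (f ω) c ^ p) μ := by
    refine Integrable.of_bound (C := c ^ p)
      ((hf.min aemeasurable_const).pow_const p).aestronglyMeasurable ?_
    filter_upwards [hf0] with ω hω
    rw [norm_of_nonneg (rpow_nonneg (le_min hω hc) _)]
    exact rpow_le_rpow (le_min hω hc) (min_le_right _ _) hp.le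
  have htail_int : IntegrableOn tail (Ioo 0 c) := by
    have hanti : Antitone fun t ↦ μ.real {ω | t < f ω} := fun s t hst ↦
      measureReal_mono fun ω hω ↦ hst.trans_lt hω
    refine ((intervalIntegral.intervalIntegrable_rpow' (by linarith : -1 < p - 1)).1.mono_set
      Ioo_subset_Ioc_self).mul_bdd (c := μ.real univ) hanti.measurable.aestronglyMeasurable ?_
    exact ae_of_all _ fun t ↦ by
      rw [norm_of_nonneg measureReal_nonneg]; exact measureReal_mono (subset_univ _)
  have htail_nn : 0 ≤ᵐ[volume.restrict (Ioo 0 c)] tail := by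
    filter_upwards [ae_restrict_mem measurableSet_Ioo] with t ht
    exact mul_nonneg (rpow_nonneg ht.1.le _) measureReal_nonneg
  have hlint := lintegral_min_rpow_eq_lintegral_meas_lt_mul hf0 hf hp hc
  have htail : ∀ t, μ {ω | t < f ω} * ENNReal.ofReal (t ^ (p - 1)) = ENNReal.ofReal (tail t) := by
    intro t
    rw [mul_comm, ENNReal.ofReal_mul' measureReal_nonneg, ofReal_measureReal]
  simp_rw [htail] at hlint
  rw [← ofReal_integral_eq_lintegral_ofReal hmin_int hmin_nn,
    ← ofReal_integral_eq_lintegral_ofReal htail_int htail_nn, ← ENNReal.ofReal_mul hp.le,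
    ENNReal.ofReal_eq_ofReal_iff (integral_nonneg_of_ae hmin_nn)
      (mul_nonneg hp.le (integral_nonneg_of_ae htail_nn))] at hlint
  rw [hlint, intervalIntegral.integral_of_le hc, integral_Ioc_eq_integral_Ioo]

theorem integral_rpow_min_div_eq_one_sub_setIntegral [IsProbabilityMeasure μ] {X : Ω → ℝ} (hX : Measurable X)
    (hXnn : 0 ≤ᵐ[μ] X) {x α : ℝ} (hx : 0 < x) (hα : 0 ≤ α) :
    ∫ ω, (min (X ω) x / x) ^ α ∂μ = 1 - ∫ ω in {ω | X ω ≤ x}, (1 - (X ω / x) ^ α) ∂μ := by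
  have hint : Integrable (fun ω ↦ (min (X ω) x / x) ^ α) μ := by
    refine Integrable.of_bound (C := 1) (by fun_prop) ?_
    filter_upwards [hXnn] with ω hω
    have hbase : 0 ≤ min (X ω) x / x := div_nonneg (le_min hω hx.le) hx.le
    rw [norm_of_nonneg (rpow_nonneg hbase _)]
    exact rpow_le_one hbase ((div_le_one hx).2 (min_le_right _ _)) hα
  have hindicator : {ω | X ω ≤ x}.indicator (fun ω ↦ 1 - (X ω / x) ^ α) =
      fun ω ↦ 1 - (min (X ω) x / x) ^ α := by
    funext ω
    by_cases h : X ω ≤ x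
    · simp [h]
    · simp [h, le_of_not_ge h, hx.ne']
  rw [← integral_indicator (measurableSet_le hX measurable_const), hindicator,
    integral_sub (integrable_const 1) hint, integral_const, probReal_univ, one_smul, sub_sub_cancel]

end LayerCake

theorem stmt3 {Ω : Type*} [MeasurableSpace Ω] (μ : Measure Ω) [IsProbabilityMeasure μ]
    (X : Ω → ℝ) (hX : Measurable X) (hXnn : ∀ ω, 0 ≤ X ω)
    (α : ℝ) (hα : 0 < α)
    (F : ℝ → ℝ) (hF : ∀ x, F x = (μ {ω | X ω ≤ x}).toReal) :
    ∀ x > 0,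
      1 - (∫ ω in {ω | X ω ≤ x}, (1 - (X ω / x) ^ α) ∂μ)
        = α * x ^ (-α) * (∫ t in (0:ℝ)..x, t ^ (α - 1) * (1 - F t)) := by
  intro x hx
  have hF_compl : ∀ t, 1 - F t = μ.real {ω | t < X ω} := fun t ↦ by
    rw [hF, ← measureReal_def, ← probReal_compl_eq_one_sub (measurableSet_le hX measurable_const)]
    simp only [compl_ofPred, not_le]
  rw [← integral_rpow_min_div_eq_one_sub_setIntegral hX (ae_of_all _ hXnn) hx hα.le]
  calc ∫ ω, (min (X ω) x / x) ^ α ∂μ = x ^ (-α) * ∫ ω, min (X ω) x ^ α ∂μ := by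
        rw [← integral_const_mul]
        congr with ω
        rw [div_rpow (le_min (hXnn ω) hx.le) hx.le, rpow_neg hx.le, div_eq_inv_mul]
    _ = α * x ^ (-α) * ∫ t in (0:ℝ)..x, t ^ (α - 1) * (1 - F t) := by
        rw [integral_min_rpow_eq_intervalIntegral (ae_of_all _ hXnn) hX.aemeasurable hα hx.le]
        simp only [hF_compl]
        ring
end

section
/- Let X be a nonnegative random variable with continuous distribution function F, let α>0, and let Z be an independent random variable with P(Z≤x)=x^α for 0≤x≤1. Then the Williamson transform G_F(x)=∫_0^x(1-(t/x)^α)dF(t) equals P(X/Z ≤ x) for every x>0. -/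
open MeasureTheory Filter Topology Real Set

theorem stmt4 {Ω : Type*} [MeasurableSpace Ω] (μ : Measure Ω) [IsProbabilityMeasure μ]
    (X Z : Ω → ℝ) (hX : Measurable X) (hZ : Measurable Z)
    (hXnn : ∀ ω, 0 ≤ X ω)
    (α : ℝ) (hα : 0 < α)
    (hFcont : Continuous fun x : ℝ => (μ {ω | X ω ≤ x}).toReal)
    (hZrange : ∀ ω, Z ω ∈ Set.Ioc (0:ℝ) 1)
    (hZlaw : ∀ x : ℝ, 0 ≤ x → x ≤ 1 → (μ {ω | Z ω ≤ x}).toReal = x ^ α)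
    (hindep : ProbabilityTheory.IndepFun X Z μ) :
    ∀ x > 0,
      (∫ ω in {ω | X ω ≤ x}, (1 - (X ω / x) ^ α) ∂μ)
        = (μ {ω | X ω / Z ω ≤ x}).toReal := by
  -- left-continuity of the Z-cdf
  have hZlt : ∀ s : ℝ, 0 < s → s ≤ 1 → (μ {ω | Z ω < s}).toReal = s ^ α := by
    intro s hs hs1
    refine le_antisymm ?_ ?_
    · calc (μ {ω | Z ω < s}).toReal
          ≤ (μ {ω | Z ω ≤ s}).toReal :=
            ENNReal.toReal_mono (measure_ne_top _ _)
              (measure_mono (setOf_subset_setOf.mpr fun ω => le_of_lt))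
        _ = s ^ α := hZlaw s hs.le hs1
    · have htend : Tendsto (fun t : ℝ => t ^ α) (𝓝[<] s) (𝓝 (s ^ α)) :=
        ((Real.continuousAt_rpow_const s α (Or.inl hs.ne')).tendsto).mono_left
          nhdsWithin_le_nhds
      refine le_of_tendsto htend ?_
      filter_upwards [self_mem_nhdsWithin,
        mem_nhdsWithin_of_mem_nhds (Ioi_mem_nhds hs)] with t ht ht0
      calc (t : ℝ) ^ α = (μ {ω | Z ω ≤ t}).toReal :=
            (hZlaw t (le_of_lt ht0) (le_trans (le_of_lt ht) hs1)).symm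
        _ ≤ (μ {ω | Z ω < s}).toReal :=
            ENNReal.toReal_mono (measure_ne_top _ _)
              (measure_mono (setOf_subset_setOf.mpr fun ω h => lt_of_le_of_lt h ht))
  intro x hx
  set ν := μ.map X with hν
  set ρ := μ.map Z with hρ
  haveI : IsProbabilityMeasure ρ := Measure.isProbabilityMeasure_map hZ.aemeasurable
  haveI : IsProbabilityMeasure ν := Measure.isProbabilityMeasure_map hX.aemeasurable
  have hSm : MeasurableSet {p : ℝ × ℝ | p.1 ≤ x * p.2} :=
    measurableSet_le measurable_fst (measurable_snd.const_mul x)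
  have hpair : μ.map (fun ω => (X ω, Z ω)) = ν.prod ρ :=
    (ProbabilityTheory.indepFun_iff_map_prod_eq_prod_map_map hX.aemeasurable
      hZ.aemeasurable).mp hindep
  have hset : {ω | X ω / Z ω ≤ x} = (fun ω => (X ω, Z ω)) ⁻¹' {p | p.1 ≤ x * p.2} := by
    ext ω
    simp only [mem_setOf_eq, mem_preimage]
    rw [div_le_iff₀ (hZrange ω).1, mul_comm]
  have hmeas : μ {ω | X ω / Z ω ≤ x} = ∫⁻ a, ρ {b | a ≤ x * b} ∂ν := by
    rw [hset, ← Measure.map_apply (hX.prodMk hZ) hSm, hpair, Measure.prod_apply hSm]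
    rfl
  -- slice measure in terms of μ
  have hslice : ∀ a : ℝ, ρ {b | a ≤ x * b} = μ {ω | a ≤ x * Z ω} := by
    intro a
    have h : MeasurableSet {b : ℝ | a ≤ x * b} :=
      measurableSet_le measurable_const (measurable_const.mul (fun s hs => hs))
    rw [hρ, Measure.map_apply hZ h]
    rfl
  -- the target integrand
  set g : ℝ → ℝ := Set.indicator (Iic x) (fun t => 1 - (t / x) ^ α) with hg
  have hgmeas : Measurable g := by
    apply Measurable.indicator _ measurableSet_Iic
    exact measurable_const.sub ((Real.continuous_rpow_const hα.le).measurable.comp (measurable_id.div_const x))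
  -- pointwise computation for a ≥ 0
  have hkg : ∀ a : ℝ, 0 ≤ a → (μ {ω | a ≤ x * Z ω}).toReal = g a := by
    intro a ha
    by_cases hax : a ≤ x
    · have hsc : {ω | a ≤ x * Z ω} = {ω | Z ω < a / x}ᶜ := by
        ext ω
        simp only [mem_setOf_eq, mem_compl_iff, not_lt]
        rw [div_le_iff₀ hx, mul_comm]
      have hZm : MeasurableSet {ω | Z ω < a / x} := hZ measurableSet_Iio
      have hlt : (μ {ω | Z ω < a / x}).toReal = (a / x) ^ α := by
        rcases eq_or_lt_of_le ha with h0 | h0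
        · have : {ω | Z ω < a / x} = (∅ : Set Ω) := by
            ext ω
            simp only [mem_setOf_eq, mem_empty_iff_false, iff_false, not_lt]
            rw [← h0, zero_div]
            exact le_of_lt (hZrange ω).1
          rw [this, measure_empty, ENNReal.toReal_zero, ← h0, zero_div,
            Real.zero_rpow hα.ne']
        · exact hZlt (a / x) (div_pos h0 hx) ((div_le_one hx).mpr hax)
      rw [hsc, prob_compl_eq_one_sub hZm,
        ENNReal.toReal_sub_of_le prob_le_one ENNReal.one_ne_top, ENNReal.toReal_one,
        hlt, hg, Set.indicator_of_mem (mem_Iic.mpr hax)]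
    · have : {ω | a ≤ x * Z ω} = (∅ : Set Ω) := by
        ext ω
        simp only [mem_setOf_eq, mem_empty_iff_false, iff_false, not_le]
        calc x * Z ω ≤ x * 1 := by
              have := (hZrange ω).2
              nlinarith
          _ = x := mul_one x
          _ < a := lt_of_not_ge hax
      rw [this, measure_empty, ENNReal.toReal_zero, hg,
        Set.indicator_of_notMem (by simpa using hax)]
  -- a.e. nonnegativity under ν
  have hae : ∀ᵐ a ∂ν, 0 ≤ a := by
    rw [ae_iff]
    have : {a : ℝ | ¬ 0 ≤ a} = Iio 0 := by ext a; simp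
    rw [this, hν, Measure.map_apply hX measurableSet_Iio]
    have : X ⁻¹' Iio 0 = (∅ : Set Ω) := by
      ext ω
      simp only [mem_preimage, mem_Iio, mem_empty_iff_false, iff_false, not_lt]
      exact hXnn ω
    rw [this, measure_empty]
  -- assemble
  have hLHS : (∫ ω in {ω | X ω ≤ x}, (1 - (X ω / x) ^ α) ∂μ) = ∫ ω, g (X ω) ∂μ := by
    have hs : MeasurableSet {ω | X ω ≤ x} := hX measurableSet_Iic
    rw [show (∫ ω in {ω | X ω ≤ x}, (1 - (X ω / x) ^ α) ∂μ)
        = ∫ ω, ({ω | X ω ≤ x}).indicator (fun ω => 1 - (X ω / x) ^ α) ω ∂μ from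
      (integral_indicator hs).symm]
    refine integral_congr_ae (ae_of_all _ fun ω => ?_)
    by_cases h : X ω ≤ x
    · simp [hg, Set.indicator_of_mem, h]
    · simp [hg, Set.indicator_of_notMem, h]
  rw [hLHS, ← integral_map hX.aemeasurable hgmeas.aestronglyMeasurable]
  have h1 : ∫ a, g a ∂ν = ∫ a, (μ {ω | a ≤ x * Z ω}).toReal ∂ν := by
    refine integral_congr_ae ?_
    filter_upwards [hae] with a ha
    exact (hkg a ha).symm
  have h2 : ∫ a, (μ {ω | a ≤ x * Z ω}).toReal ∂ν = (∫⁻ a, ρ {b | a ≤ x * b} ∂ν).toReal := by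
    rw [show (fun a => (μ {ω | a ≤ x * Z ω}).toReal) = fun a => (ρ {b | a ≤ x * b}).toReal by
      funext a; rw [hslice a]]
    refine integral_toReal ?_ (ae_of_all _ fun a => measure_lt_top ρ _)
    exact (measurable_measure_prodMk_left hSm).aemeasurable
  rw [h1, h2, ← hmeas]
end

section
/- For a nonnegative random variable X with distribution function F and α>0 with m(α)=E[X^α]<∞, the function x^α(1-G_F(x)) tends to m(α) as x→∞, where G_F is the Williamson transform with parameter α. -/
/-!
With `Y = X ^ α` and `c = x ^ α`, the event `{X ≤ x}` is `{Y ≤ c}` and pointwise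
`c * (1 - 𝟙{Y ≤ c} * (1 - Y / c)) = min Y c`, so `x ^ α * (1 - G x) = E[min Y c]`.
As `c → ∞` this tends to `E[Y]` by dominated convergence, with `|Y|` as dominating function.
-/

open MeasureTheory Filter Topology Real Set

namespace MeasureTheory

variable {Ω : Type*} [MeasurableSpace Ω] {μ : Measure Ω} {f : Ω → ℝ}

theorem tendsto_integral_min_atTop (hf : Integrable f μ) :
    Tendsto (fun c => ∫ ω, min (f ω) c ∂μ) atTop (𝓝 (∫ ω, f ω ∂μ)) := by
  refine tendsto_integral_filter_of_dominated_convergence (fun ω => |f ω|)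
    (Eventually.of_forall fun c => hf.aestronglyMeasurable.inf aestronglyMeasurable_const)
    ?_ hf.abs (ae_of_all μ fun ω => ?_)
  · filter_upwards [eventually_ge_atTop 0] with c hc
    refine ae_of_all μ fun ω => ?_
    rw [Real.norm_eq_abs, abs_le]
    constructor
    · exact le_min (neg_abs_le _) (by linarith [abs_nonneg (f ω)])
    · exact (min_le_left _ _).trans (le_abs_self _)
  · refine tendsto_const_nhds.congr' ?_
    filter_upwards [eventually_ge_atTop (f ω)] with c hc
    exact (min_eq_left hc).symm

theorem mul_one_sub_setIntegral_le_eq_integral_min [IsProbabilityMeasure μ]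
    (hf : Integrable f μ) {c : ℝ} (hc : c ≠ 0) :
    c * (1 - ∫ ω in {ω | f ω ≤ c}, (1 - f ω / c) ∂μ) = ∫ ω, min (f ω) c ∂μ := by
  set s := {ω | f ω ≤ c}
  have hs : NullMeasurableSet s μ := nullMeasurableSet_le hf.aemeasurable aemeasurable_const
  have hmin : ∀ ω, min (f ω) c = c - c * s.indicator (fun ω => 1 - f ω / c) ω := by
    intro ω
    by_cases hω : f ω ≤ c
    · rw [min_eq_left hω, indicator_of_mem (show ω ∈ s from hω)]
      field_simp
      ring
    · rw [min_eq_right (not_le.mp hω).le, indicator_of_notMem (show ω ∉ s from hω)]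
      ring
  have hind : Integrable (s.indicator fun ω => 1 - f ω / c) μ :=
    ((integrable_const 1).sub (hf.div_const c)).indicator₀ hs
  simp_rw [hmin]
  rw [integral_sub (integrable_const c) (hind.const_mul c), integral_const_mul,
    integral_indicator₀ hs]
  simp only [integral_const, probReal_univ, smul_eq_mul, one_mul]
  ring

end MeasureTheory

theorem stmt6_general {Ω : Type*} [MeasurableSpace Ω] (μ : Measure Ω) [IsProbabilityMeasure μ]
    (X : Ω → ℝ) (hXnn : ∀ ω, 0 ≤ X ω)
    (α : ℝ) (hα : 0 < α)
    (hint : Integrable (fun ω => X ω ^ α) μ)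
    (G : ℝ → ℝ)
    (hG : ∀ x > 0, G x = ∫ ω in {ω | X ω ≤ x}, (1 - (X ω / x) ^ α) ∂μ) :
    Tendsto (fun x => x ^ α * (1 - G x)) atTop (𝓝 (∫ ω, X ω ^ α ∂μ)) := by
  refine ((tendsto_integral_min_atTop hint).comp (tendsto_rpow_atTop hα)).congr' ?_
  filter_upwards [eventually_gt_atTop 0] with x hx
  have hset : {ω | X ω ≤ x} = {ω | X ω ^ α ≤ x ^ α} := by
    ext ω
    exact (rpow_le_rpow_iff (hXnn ω) hx.le hα).symm
  have hpow : ∀ ω, (X ω / x) ^ α = X ω ^ α / x ^ α := fun ω => div_rpow (hXnn ω) hx.le α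
  rw [Function.comp_apply, hG x hx, hset]
  simp_rw [hpow]
  exact (mul_one_sub_setIntegral_le_eq_integral_min hint (rpow_pos_of_pos hx α).ne').symm

theorem stmt6 {Ω : Type*} [MeasurableSpace Ω] (μ : Measure Ω) [IsProbabilityMeasure μ]
    (X : Ω → ℝ) (hX : Measurable X) (hXnn : ∀ ω, 0 ≤ X ω)
    (α : ℝ) (hα : 0 < α)
    (hint : Integrable (fun ω => X ω ^ α) μ)
    (G : ℝ → ℝ)
    (hG : ∀ x > 0, G x = ∫ ω in {ω | X ω ≤ x}, (1 - (X ω / x) ^ α) ∂μ) :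
    Tendsto (fun x => x ^ α * (1 - G x)) atTop (𝓝 (∫ ω, X ω ^ α ∂μ)) :=
  stmt6_general μ X hXnn α hα hint G hG
end

section
/- Suppose a differentiable distribution function F on [0,∞) and a differentiable function G on (0,∞) satisfy the Williamson inversion relation F(x)=G(x)+(x/α)G'(x) with G(x)=αx^{-α}∫_0^x t^{α-1}F(t)dt. Then the function R(x) defined so that its Williamson transform is G_R(x)=1/(1-G(x)) satisfies R(x) = 2/(1-G(x)) - (1-F(x))/(1-G(x))^2, whenever G(x)<1. -/
theorem HasDerivAt.one_div_one_sub {𝕜 : Type*} [NontriviallyNormedField 𝕜] {G : 𝕜 → 𝕜}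
    {G' x : 𝕜} (hG : HasDerivAt G G' x) (hx : G x ≠ 1) :
    HasDerivAt (fun y => 1 / (1 - G y)) (G' / (1 - G x) ^ 2) x := by
  have h := (hG.const_sub 1).inv (sub_ne_zero.2 hx.symm)
  simpa only [div_eq_mul_inv, one_mul, Pi.inv_def, neg_neg] using h

theorem stmt8_general (α : ℝ) (F G : ℝ → ℝ)
    (hGdiff : ∀ x > 0, DifferentiableAt ℝ G x)
    (hinv : ∀ x > 0, F x = G x + (x / α) * deriv G x) :
    ∀ x > 0, G x < 1 →
      (1 / (1 - G x) + (x / α) * deriv (fun y => 1 / (1 - G y)) x)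
        = 2 / (1 - G x) - (1 - F x) / (1 - G x) ^ 2 := by
  intro x hx hG
  have hne : 1 - G x ≠ 0 := by linarith
  rw [((hGdiff x hx).hasDerivAt.one_div_one_sub hG.ne).deriv, hinv x hx]
  field_simp
  ring

theorem stmt8 (α : ℝ) (hα : 0 < α) (F G : ℝ → ℝ)
    (hGdiff : ∀ x > 0, DifferentiableAt ℝ G x)
    (hinv : ∀ x > 0, F x = G x + (x / α) * deriv G x) :
    ∀ x > 0, G x < 1 →
      (1 / (1 - G x) + (x / α) * deriv (fun y => 1 / (1 - G y)) x)
        = 2 / (1 - G x) - (1 - F x) / (1 - G x) ^ 2 :=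
  stmt8_general α F G hGdiff hinv
end

section
/- Let F(x)=1-x^{-β} for x≥1, 0<α<β, m=β/(β-α), and R(x)=2/(1-G_F(x))-(1-F(x))/(1-G_F(x))^2 with 1-G_F(x)=mx^{-α}+(1-m)x^{-β}. Then x^{β-2α}(R(x)-2x^α/m) → (2m-3)/m^2 as x→∞. -/
/-!
With `p = x ^ (-α)` and `q = x ^ (-(β - α))` the denominator of `R` factors as
`p * (m + (1 - m) * q)`, and the rescaled correction `x ^ (β - 2α) * (R x - 2 x ^ α / m)`
becomes a rational function of `q` alone, continuous at `q = 0`. Since `q → 0` as `x → ∞`,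
the limit is its value at `0`, namely `2 (m - 1) / m² - 1 / m²`.
-/

open Filter Topology Real

noncomputable section

/-- The rescaled correction term as a function of `q = x ^ (-(β - α))`. -/
def kendallCorrection (m q : ℝ) : ℝ :=
  2 * (m - 1) / (m * (m + (1 - m) * q)) - 1 / (m + (1 - m) * q) ^ 2

lemma kendallCorrection_eq {m p q : ℝ} (hm : m ≠ 0) (hp : p ≠ 0) (hq : q ≠ 0)
    (hw : m + (1 - m) * q ≠ 0) :
    p / q * (2 / (m * p + (1 - m) * (p * q)) - p * q / (m * p + (1 - m) * (p * q)) ^ 2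
      - 2 * p⁻¹ / m) = kendallCorrection m q := by
  have hD : m * p + (1 - m) * (p * q) = p * (m + (1 - m) * q) := by ring
  rw [kendallCorrection, hD]
  generalize hwdef : m + (1 - m) * q = w at hw ⊢
  field_simp
  linear_combination (2 * w) * hwdef

lemma kendallCorrection_zero {m : ℝ} (hm : m ≠ 0) :
    kendallCorrection m 0 = (2 * m - 3) / m ^ 2 := by
  simp only [kendallCorrection, mul_zero, add_zero]
  field_simp
  ring

lemma continuousAt_kendallCorrection_zero {m : ℝ} (hm : m ≠ 0) :
    ContinuousAt (kendallCorrection m) 0 := by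
  unfold kendallCorrection
  have hw : m + (1 - m) * 0 ≠ 0 := by simpa using hm
  exact ((continuousAt_const.div (continuousAt_const.mul (by fun_prop))
    (by simpa using mul_ne_zero hm hw)).sub
    (continuousAt_const.div (by fun_prop) (pow_ne_zero 2 hw)))

lemma eventually_ne_zero_affine_nhds_zero {m : ℝ} (hm : m ≠ 0) :
    ∀ᶠ q in 𝓝 (0 : ℝ), m + (1 - m) * q ≠ 0 := by
  have h : ContinuousAt (fun q : ℝ => m + (1 - m) * q) 0 := by fun_prop
  exact h.eventually_ne (by simpa using hm)

end

theorem stmt12 (α β : ℝ) (hα : 0 < α) (hβ : α < β)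
    (m : ℝ) (hm : m = β / (β - α))
    (R : ℝ → ℝ)
    (hR : ∀ x ≥ 1,
      R x = 2 / (m * x ^ (-α) + (1 - m) * x ^ (-β))
            - x ^ (-β) / (m * x ^ (-α) + (1 - m) * x ^ (-β)) ^ 2) :
    Tendsto (fun x => x ^ (β - 2 * α) * (R x - 2 * x ^ α / m)) atTop
      (𝓝 ((2 * m - 3) / m ^ 2)) := by
  have hβα : 0 < β - α := sub_pos.2 hβ
  have hm0 : m ≠ 0 := by rw [hm]; exact div_ne_zero (by linarith) hβα.ne'
  have hq : Tendsto (fun x : ℝ => x ^ (-(β - α))) atTop (𝓝 0) := tendsto_rpow_neg_atTop hβα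
  have hlim : Tendsto (fun x : ℝ => kendallCorrection m (x ^ (-(β - α)))) atTop
      (𝓝 ((2 * m - 3) / m ^ 2)) := by
    rw [← kendallCorrection_zero hm0]
    exact (continuousAt_kendallCorrection_zero hm0).tendsto.comp hq
  refine hlim.congr' ?_
  filter_upwards [eventually_ge_atTop (1 : ℝ),
    hq.eventually (eventually_ne_zero_affine_nhds_zero hm0)] with x hx1 hw
  have hx0 : 0 < x := one_pos.trans_le hx1
  have hsplit : x ^ (-β) = x ^ (-α) * x ^ (-(β - α)) := by rw [← rpow_add hx0]; ring_nf
  have hscale : x ^ (β - 2 * α) = x ^ (-α) / x ^ (-(β - α)) := by rw [← rpow_sub hx0]; ring_nf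
  have hinv : x ^ α = (x ^ (-α))⁻¹ := by rw [rpow_neg hx0.le, inv_inv]
  rw [hR x hx1, hsplit, hscale, hinv]
  exact (kendallCorrection_eq hm0 (rpow_pos_of_pos hx0 _).ne'
    (rpow_pos_of_pos hx0 _).ne' hw).symm
end

section
/- Let F(x)=1-e^{-x} for x≥0 and α=1. Then the Williamson transform satisfies G_F(x)=1-F(x)/x for x>0, and the Kendall renewal function R(x)=2/(1-G_F(x))-(1-F(x))/(1-G_F(x))^2 = (x/F(x))(2 - x(1-F(x))/F(x)); in particular R(x)/x→2 as x→∞. -/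
open MeasureTheory Filter Topology Real Set

/-! For the exponential law the Williamson transform has the elementary antiderivative
`(t / x + 1 / x - 1) * exp (-t)`, which gives `G_F(x) = 1 - F(x) / x`.  Substituting this
into Kendall's formula is pure algebra, and the asymptotics `R(x) / x → 2` follow from
`F(x) → 1` and `x * exp (-x) → 0`. -/

lemma integral_one_sub_div_mul_exp_neg {x : ℝ} (hx : x ≠ 0) :
    ∫ t in (0:ℝ)..x, (1 - t / x) * exp (-t) = 1 - (1 - exp (-x)) / x := by
  have hderiv : ∀ t ∈ uIcc (0:ℝ) x, HasDerivAt (fun t => (t / x + 1 / x - 1) * exp (-t))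
      ((1 - t / x) * exp (-t)) t := by
    intro t _
    have hlin : HasDerivAt (fun t : ℝ => t / x + 1 / x - 1) (1 / x) t :=
      ((hasDerivAt_id t).div_const x).add_const _ |>.sub_const _
    exact (hlin.mul (hasDerivAt_neg t).exp).congr_deriv (by field_simp; ring)
  rw [intervalIntegral.integral_eq_sub_of_hasDerivAt hderiv
    ((by fun_prop : Continuous _).intervalIntegrable _ _)]
  field_simp
  simp only [neg_zero, exp_zero]
  ring

lemma kendall_renewal_eq_of_williamson {p x : ℝ} (hp : p ≠ 0) (hx : x ≠ 0) :
    2 / (1 - (1 - p / x)) - (1 - p) / (1 - (1 - p / x)) ^ 2 = (x / p) * (2 - x * (1 - p) / p) := by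
  rw [sub_sub_cancel]
  field_simp

lemma one_sub_exp_neg_pos {x : ℝ} (hx : 0 < x) : 0 < 1 - exp (-x) := by
  simpa using exp_lt_one_iff.mpr (neg_lt_zero.mpr hx)

lemma tendsto_kendall_renewal_exp_div_self :
    Tendsto (fun x : ℝ => (x / (1 - exp (-x))) * (2 - x * exp (-x) / (1 - exp (-x))) / x)
      atTop (𝓝 2) := by
  have hF : Tendsto (fun x : ℝ => 1 - exp (-x)) atTop (𝓝 1) := by
    simpa using tendsto_exp_neg_atTop_nhds_zero.const_sub (1 : ℝ)
  have hxe : Tendsto (fun x : ℝ => x * exp (-x)) atTop (𝓝 0) := by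
    simpa using tendsto_pow_mul_exp_neg_atTop_nhds_zero 1
  have hlim : Tendsto (fun x : ℝ => (2 - x * exp (-x) / (1 - exp (-x))) / (1 - exp (-x)))
      atTop (𝓝 ((2 - 0 / 1) / 1)) :=
    (tendsto_const_nhds.sub (hxe.div hF one_ne_zero)).div hF one_ne_zero
  rw [show ((2:ℝ) - 0 / 1) / 1 = 2 by norm_num] at hlim
  refine hlim.congr' ?_
  filter_upwards [eventually_gt_atTop 0] with x hx
  have hF0 := (one_sub_exp_neg_pos hx).ne'
  field_simp

theorem stmt13 (F G R : ℝ → ℝ)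
    (hF : ∀ x, F x = 1 - Real.exp (-x))
    (hG : ∀ x > 0, G x = ∫ t in (0:ℝ)..x, (1 - t / x) * Real.exp (-t))
    (hR : ∀ x > 0, R x = 2 / (1 - G x) - (1 - F x) / (1 - G x) ^ 2) :
    (∀ x > 0, G x = 1 - F x / x) ∧
    (∀ x > 0, R x = (x / F x) * (2 - x * (1 - F x) / F x)) ∧
    Tendsto (fun x => R x / x) atTop (𝓝 2) := by
  have hGF : ∀ x > 0, G x = 1 - F x / x := fun x hx => by
    rw [hG x hx, hF, integral_one_sub_div_mul_exp_neg hx.ne']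
  have hRF : ∀ x > 0, R x = (x / F x) * (2 - x * (1 - F x) / F x) := fun x hx => by
    rw [hR x hx, hGF x hx]
    exact kendall_renewal_eq_of_williamson (by rw [hF]; exact (one_sub_exp_neg_pos hx).ne') hx.ne'
  refine ⟨hGF, hRF, tendsto_kendall_renewal_exp_div_self.congr' ?_⟩
  filter_upwards [eventually_gt_atTop 0] with x hx
  rw [hRF x hx, hF, sub_sub_cancel]
end

section
/- For the standard exponential distribution F(x)=1-e^{-x}, α=1, and R(x)=(x/F(x))(2-x(1-F(x))/F(x)), one has R(x)-2x ~ -x^2 e^{-x} as x→∞, i.e. (R(x)-2x)/(x^2 e^{-x}) → -1. -/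
open MeasureTheory Filter Topology Real Set

theorem stmt14 (F R : ℝ → ℝ)
    (hF : ∀ x, F x = 1 - Real.exp (-x))
    (hR : ∀ x > 0, R x = (x / F x) * (2 - x * (1 - F x) / F x)) :
    Tendsto (fun x => (R x - 2 * x) / (x ^ 2 * Real.exp (-x))) atTop (𝓝 (-1)) := by
  have h1 : Tendsto (fun x : ℝ => 1 - Real.exp (-x)) atTop (𝓝 1) := by
    have h := Real.tendsto_exp_neg_atTop_nhds_zero
    simpa using tendsto_const_nhds.sub h
  have h3 : Tendsto (fun x : ℝ => 2 / x * (1 / (1 - Real.exp (-x)))) atTop (𝓝 0) := by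
    have ha : Tendsto (fun x : ℝ => 2 / x) atTop (𝓝 0) := by
      simpa [div_eq_mul_inv] using tendsto_inv_atTop_zero.const_mul (2 : ℝ)
    have hb : Tendsto (fun x : ℝ => 1 / (1 - Real.exp (-x))) atTop (𝓝 1) := by
      have := Tendsto.div (tendsto_const_nhds : Tendsto (fun _ : ℝ => (1:ℝ)) atTop (𝓝 1)) h1 one_ne_zero
      simpa [Pi.div_def] using this
    simpa using ha.mul hb
  have h4 : Tendsto (fun x : ℝ => 1 / (1 - Real.exp (-x)) ^ 2) atTop (𝓝 1) := by
    have h := Tendsto.div (tendsto_const_nhds : Tendsto (fun _ : ℝ => (1:ℝ)) atTop (𝓝 1)) (h1.pow 2) (by norm_num)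
    simpa [Pi.div_def] using h
  have hlim : Tendsto (fun x : ℝ =>
      2 / x * (1 / (1 - Real.exp (-x))) - 1 / (1 - Real.exp (-x)) ^ 2) atTop (𝓝 (-1)) := by
    have := h3.sub h4
    simpa using this
  refine hlim.congr' ?_
  filter_upwards [eventually_gt_atTop 0] with x hx
  have hE : Real.exp (-x) < 1 := Real.exp_lt_one_iff.mpr (by linarith)
  have hF0 : (1 : ℝ) - Real.exp (-x) ≠ 0 := by linarith
  have hE0 : Real.exp (-x) ≠ 0 := (Real.exp_pos _).ne'
  rw [hR x hx, hF x]
  field_simp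
  ring
end

section
/- Let F(x)=x^α for 0<x≤1 and F(x)=1 for x≥1 (power law on [0,1]), α>0. Then the Williamson transform equals G_F(x)=x^α/2 for 0<x≤1 and G_F(x)=1-1/(2x^α) for x≥1, m(α)=E[X^α]=1/2, and the Kendall renewal function satisfies x^{-α}R(x)=4 exactly for all x≥1. -/
/-!
With density `α t^(α-1)`, the Williamson integrand `(1 - (t/x)^α) α t^(α-1)` splits into
`α t^(α-1) - (2 x^α)⁻¹ · 2α t^(2α-1)`, so `∫₀ᶜ = c^α - c^(2α) / (2 x^α)`; taking `c = min x 1`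
gives both formulas for `G_F`. For `x ≥ 1` we have `F x = 1`, so `R x = 2 / (1 - G x) = 4 x^α`.
-/

open MeasureTheory Filter Topology Real Set

lemma integral_mul_rpow_sub_one {γ : ℝ} (hγ : 0 < γ) (c : ℝ) :
    ∫ t in (0:ℝ)..c, γ * t ^ (γ - 1) = c ^ γ := by
  rw [intervalIntegral.integral_const_mul, integral_rpow (Or.inl (by linarith)),
    sub_add_cancel, zero_rpow hγ.ne']
  field_simp
  ring

lemma rpow_mul_rpow_sub_one {t : ℝ} (ht : 0 < t) (α : ℝ) :
    t ^ α * t ^ (α - 1) = t ^ (2 * α - 1) := by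
  rw [← rpow_add ht]; ring_nf

lemma integral_rpow_mul_mul_rpow_sub_one {α : ℝ} (hα : 0 < α) {c : ℝ} (hc : 0 ≤ c) :
    ∫ t in (0:ℝ)..c, t ^ α * (α * t ^ (α - 1)) = c ^ (2 * α) / 2 := by
  have hpt : EqOn (fun t : ℝ ↦ t ^ α * (α * t ^ (α - 1)))
      (fun t ↦ 2⁻¹ * (2 * α * t ^ (2 * α - 1))) (uIoc 0 c) := by
    intro t ht
    simp only [← rpow_mul_rpow_sub_one (by rw [uIoc_of_le hc] at ht; exact ht.1)]
    ring
  rw [intervalIntegral.integral_congr_ae (.of_forall fun t ht ↦ hpt ht),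
    intervalIntegral.integral_const_mul, integral_mul_rpow_sub_one (by positivity)]
  ring

lemma integral_williamson_powerLaw {α x c : ℝ} (hα : 0 < α) (hx : 0 < x) (hc : 0 ≤ c) :
    ∫ t in (0:ℝ)..c, (1 - (t / x) ^ α) * (α * t ^ (α - 1))
      = c ^ α - c ^ (2 * α) / (2 * x ^ α) := by
  have hxα : x ^ α ≠ 0 := (rpow_pos_of_pos hx α).ne'
  have hpt : EqOn (fun t : ℝ ↦ (1 - (t / x) ^ α) * (α * t ^ (α - 1)))
      (fun t ↦ α * t ^ (α - 1) - (2 * x ^ α)⁻¹ * (2 * α * t ^ (2 * α - 1))) (uIoc 0 c) := by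
    intro t ht
    have ht0 : 0 < t := by rw [uIoc_of_le hc] at ht; exact ht.1
    simp only [div_rpow ht0.le hx.le, ← rpow_mul_rpow_sub_one ht0]
    field_simp
  have hint : ∀ γ : ℝ, 0 < γ → IntervalIntegrable (fun t : ℝ ↦ γ * t ^ (γ - 1)) volume 0 c :=
    fun γ hγ ↦ (intervalIntegral.intervalIntegrable_rpow' (by linarith)).const_mul γ
  rw [intervalIntegral.integral_congr_ae (.of_forall fun t ht ↦ hpt ht),
    intervalIntegral.integral_sub (hint α hα) ((hint (2 * α) (by positivity)).const_mul _),
    intervalIntegral.integral_const_mul (2 * x ^ α)⁻¹, integral_mul_rpow_sub_one hα,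
    integral_mul_rpow_sub_one (by positivity)]
  ring

theorem stmt15_general (α : ℝ) (hα : 0 < α) (F G R : ℝ → ℝ)
    (hF2 : ∀ x ≥ (1:ℝ), F x = 1)
    (hG : ∀ x > 0, G x = ∫ t in (0:ℝ)..(min x 1), (1 - (t / x) ^ α) * (α * t ^ (α - 1)))
    (hR : ∀ x > 0, R x = 2 / (1 - G x) - (1 - F x) / (1 - G x) ^ 2) :
    (∀ x : ℝ, 0 < x → x ≤ 1 → G x = x ^ α / 2) ∧
    (∀ x ≥ (1:ℝ), G x = 1 - 1 / (2 * x ^ α)) ∧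
    (∫ t in (0:ℝ)..1, t ^ α * (α * t ^ (α - 1))) = 1 / 2 ∧
    (∀ x ≥ (1:ℝ), x ^ (-α) * R x = 4) := by
  have hG_le_one : ∀ x : ℝ, 0 < x → x ≤ 1 → G x = x ^ α / 2 := by
    intro x hx hx1
    have hxα : x ^ α ≠ 0 := (rpow_pos_of_pos hx α).ne'
    rw [hG x hx, min_eq_left hx1, integral_williamson_powerLaw hα hx hx.le, mul_comm,
      rpow_mul hx.le, rpow_two]
    field_simp
    ring
  have hG_one_le : ∀ x ≥ (1:ℝ), G x = 1 - 1 / (2 * x ^ α) := by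
    intro x hx
    rw [hG x (by linarith), min_eq_right hx,
      integral_williamson_powerLaw hα (by linarith) zero_le_one, one_rpow, one_rpow]
  refine ⟨hG_le_one, hG_one_le, ?_, fun x hx ↦ ?_⟩
  · rw [integral_rpow_mul_mul_rpow_sub_one hα zero_le_one, one_rpow]
  · have hx0 : 0 < x := by linarith
    have hxα : x ^ α ≠ 0 := (rpow_pos_of_pos hx0 α).ne'
    rw [hR x hx0, hF2 x hx, hG_one_le x hx, rpow_neg hx0.le]
    field_simp
    ring

theorem stmt15 (α : ℝ) (hα : 0 < α) (F G R : ℝ → ℝ)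
    (hF0 : ∀ x ≤ (0:ℝ), F x = 0)
    (hF1 : ∀ x : ℝ, 0 < x → x ≤ 1 → F x = x ^ α)
    (hF2 : ∀ x ≥ (1:ℝ), F x = 1)
    (hG : ∀ x > 0, G x = ∫ t in (0:ℝ)..(min x 1), (1 - (t / x) ^ α) * (α * t ^ (α - 1)))
    (hR : ∀ x > 0, R x = 2 / (1 - G x) - (1 - F x) / (1 - G x) ^ 2) :
    (∀ x : ℝ, 0 < x → x ≤ 1 → G x = x ^ α / 2) ∧
    (∀ x ≥ (1:ℝ), G x = 1 - 1 / (2 * x ^ α)) ∧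
    (∫ t in (0:ℝ)..1, t ^ α * (α * t ^ (α - 1))) = 1 / 2 ∧
    (∀ x ≥ (1:ℝ), x ^ (-α) * R x = 4) :=
  stmt15_general α hα F G R hF2 hG hR
end

section
/- Let F(x)=(1+x^{-α})e^{-x^{-α}} for x>0 (Kendall max-stable law), α>0. Then the Williamson transform with parameter α equals G_F(x)=e^{-x^{-α}} for x>0, and m(α)=E[X^α]=1. -/
/-!
With `φ(t) = exp (-t ^ (-α))` (the Fréchet distribution function) one has `F = (1 + t ^ (-α)) φ`
and `dF(t) = α t ^ (-2α-1) φ(t) dt = t ^ (-α) dφ(t)`. Hence `t ^ α dF(t) = dφ(t)` and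
`(1 - (t / x) ^ α) dF(t) = d[(1 + t ^ (-α) - x ^ (-α)) φ(t)]`. Both primitives tend to `0` as
`t → 0⁺`, since `φ` beats every power of `t` there, so the fundamental theorem of calculus gives
`G_F(x) = φ(x)` and `E[X ^ α] = φ(∞) = 1`; integrability comes for free from nonnegativity.
-/

open MeasureTheory Filter Topology Real Set

lemma Function.update_eventuallyEq_nhds {X Y : Type*} [TopologicalSpace X] [T1Space X]
    [DecidableEq X] (f : X → Y) {a x : X} (b : Y) (hx : x ≠ a) :
    Function.update f a b =ᶠ[𝓝 x] f :=
  (Function.update_eventuallyEq f a b).filter_mono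
    (le_principal_iff.2 (compl_singleton_mem_nhds hx))

section FTC

variable {g g' : ℝ → ℝ} {a b l m : ℝ}

theorem integral_Ioc_of_hasDerivAt_of_nonneg_of_tendsto (hab : a < b)
    (hderiv : ∀ x ∈ Ioc a b, HasDerivAt g (g' x) x) (hpos : ∀ x ∈ Ioo a b, 0 ≤ g' x)
    (ha : Tendsto g (𝓝[>] a) (𝓝 l)) : ∫ x in Ioc a b, g' x = g b - l := by
  have hcont : ContinuousOn (Function.update g a l) (Icc a b) := by
    rw [continuousOn_update_iff, Icc_sdiff_left]
    exact ⟨fun x hx => (hderiv x hx).continuousAt.continuousWithinAt,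
      fun _ => ha.mono_left (nhdsWithin_mono _ Ioc_subset_Ioi_self)⟩
  have hderiv' : ∀ x ∈ Ioo a b, HasDerivAt (Function.update g a l) (g' x) x := fun x hx =>
    (hderiv x (Ioo_subset_Ioc_self hx)).congr_of_eventuallyEq
      (Function.update_eventuallyEq_nhds g l hx.1.ne')
  have hint : IntervalIntegrable g' volume a b :=
    intervalIntegral.intervalIntegrable_deriv_of_nonneg (by rwa [uIcc_of_le hab.le])
      (by simpa [hab.le] using hderiv') (by simpa [hab.le] using hpos)
  rw [← intervalIntegral.integral_of_le hab.le,
    intervalIntegral.integral_eq_sub_of_hasDerivAt_of_le hab.le hcont hderiv' hint]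
  simp [hab.ne']

theorem integral_Ioi_of_hasDerivAt_of_nonneg_of_tendsto (ha : Tendsto g (𝓝[>] a) (𝓝 l))
    (hderiv : ∀ x ∈ Ioi a, HasDerivAt g (g' x) x) (hpos : ∀ x ∈ Ioi a, 0 ≤ g' x)
    (htop : Tendsto g atTop (𝓝 m)) : ∫ x in Ioi a, g' x = m - l := by
  have hcont : ContinuousWithinAt (Function.update g a l) (Ici a) a := by
    rwa [continuousWithinAt_update_same, Ici_sdiff_left]
  have htop' : Tendsto (Function.update g a l) atTop (𝓝 m) :=
    htop.congr' ((Function.update_eventuallyEq_cofinite g a l).filter_mono atTop_le_cofinite).symm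
  simpa using integral_Ioi_of_hasDerivAt_of_nonneg hcont
    (fun x hx => (hderiv x hx).congr_of_eventuallyEq
      (Function.update_eventuallyEq_nhds g l hx.ne')) hpos htop'

end FTC

/-- The density `F'` of the Kendall law `F(t) = (1 + t ^ (-α)) exp (-t ^ (-α))`. -/
noncomputable def kendallDensity (α t : ℝ) : ℝ := α * t ^ (-2 * α - 1) * exp (-t ^ (-α))

section Frechet

variable {α t : ℝ}

lemma tendsto_rpow_mul_exp_neg_rpow_neg_nhdsGT_zero (hα : 0 < α) (s : ℝ) :
    Tendsto (fun t : ℝ => t ^ s * exp (-t ^ (-α))) (𝓝[>] 0) (𝓝 0) := by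
  -- substitute `u = t ^ (-α) → ∞`, so that `t ^ s = u ^ (-s / α)`
  refine ((tendsto_rpow_mul_exp_neg_mul_atTop_nhds_zero (-(s / α)) 1 one_pos).comp
    (tendsto_rpow_neg_nhdsGT_zero (neg_lt_zero.2 hα))).congr' ?_
  filter_upwards [self_mem_nhdsWithin] with t (ht : 0 < t)
  rw [Function.comp_apply, ← rpow_mul ht.le, neg_one_mul]
  congr 2
  field_simp

lemma tendsto_exp_neg_rpow_neg_nhdsGT_zero (hα : 0 < α) :
    Tendsto (fun t : ℝ => exp (-t ^ (-α))) (𝓝[>] 0) (𝓝 0) := by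
  simpa using tendsto_rpow_mul_exp_neg_rpow_neg_nhdsGT_zero hα 0

lemma tendsto_exp_neg_rpow_neg_atTop (hα : 0 < α) :
    Tendsto (fun t : ℝ => exp (-t ^ (-α))) atTop (𝓝 1) := by
  simpa [Function.comp_def] using (continuous_exp.tendsto _).comp (tendsto_rpow_neg_atTop hα).neg

lemma hasDerivAt_exp_neg_rpow_neg (ht : 0 < t) :
    HasDerivAt (fun t : ℝ => exp (-t ^ (-α))) (α * t ^ (-α - 1) * exp (-t ^ (-α))) t := by
  convert (hasDerivAt_rpow_const (p := -α) (Or.inl ht.ne')).neg.exp using 1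
  · rfl
  · simp only [Pi.neg_apply]; ring

lemma kendallDensity_nonneg (ht : 0 < t) (hα : 0 ≤ α) : 0 ≤ kendallDensity α t := by
  unfold kendallDensity; positivity

lemma rpow_mul_kendallDensity (ht : 0 < t) :
    t ^ α * kendallDensity α t = α * t ^ (-α - 1) * exp (-t ^ (-α)) := by
  rw [kendallDensity, show -α - 1 = α + (-2 * α - 1) by ring, rpow_add ht]
  ring

lemma hasDerivAt_kendall_williamson_primitive {x : ℝ} (hx : 0 < x) (ht : 0 < t) :
    HasDerivAt (fun t : ℝ => (1 + t ^ (-α) - x ^ (-α)) * exp (-t ^ (-α)))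
      ((1 - (t / x) ^ α) * kendallDensity α t) t := by
  have hpow : HasDerivAt (fun t : ℝ => 1 + t ^ (-α) - x ^ (-α)) (-α * t ^ (-α - 1)) t := by
    simpa using
      ((hasDerivAt_rpow_const (p := -α) (Or.inl ht.ne')).const_add 1).sub_const (x ^ (-α))
  refine (hpow.mul (hasDerivAt_exp_neg_rpow_neg ht)).congr_deriv ?_
  rw [kendallDensity, div_rpow ht.le hx.le, show -2 * α - 1 = -α + (-α - 1) by ring,
    rpow_add ht, rpow_neg hx.le, rpow_neg ht.le]
  field_simp
  ring

lemma tendsto_kendall_williamson_primitive_nhdsGT_zero (hα : 0 < α) (c : ℝ) :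
    Tendsto (fun t : ℝ => (1 + t ^ (-α) - c) * exp (-t ^ (-α))) (𝓝[>] 0) (𝓝 0) := by
  have h0 := tendsto_exp_neg_rpow_neg_nhdsGT_zero hα
  simpa using ((h0.add (tendsto_rpow_mul_exp_neg_rpow_neg_nhdsGT_zero hα (-α))).sub
    (h0.const_mul c)).congr fun t => by ring

end Frechet

theorem stmt16_general (α : ℝ) (hα : 0 < α) (G : ℝ → ℝ)
    (hG : ∀ x > 0, G x = ∫ t in Set.Ioc (0:ℝ) x,
      (1 - (t / x) ^ α) * (α * t ^ (-2 * α - 1) * Real.exp (-t ^ (-α)))) :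
    (∀ x > 0, G x = Real.exp (-x ^ (-α))) ∧
    (∫ t in Set.Ioi (0:ℝ), t ^ α * (α * t ^ (-2 * α - 1) * Real.exp (-t ^ (-α)))) = 1 := by
  refine ⟨fun x hx => ?_, ?_⟩
  · have hweight : ∀ t ∈ Ioo 0 x, 0 ≤ 1 - (t / x) ^ α := fun t ht =>
      sub_nonneg.2 (rpow_le_one (div_nonneg ht.1.le hx.le) ((div_le_one hx).2 ht.2.le) hα.le)
    have hint := integral_Ioc_of_hasDerivAt_of_nonneg_of_tendsto hx
      (fun t ht => hasDerivAt_kendall_williamson_primitive hx ht.1)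
      (fun t ht => mul_nonneg (hweight t ht) (kendallDensity_nonneg ht.1 hα.le))
      (tendsto_kendall_williamson_primitive_nhdsGT_zero hα (x ^ (-α)))
    rw [hG x hx]
    exact hint.trans (by ring)
  · have hint := integral_Ioi_of_hasDerivAt_of_nonneg_of_tendsto
      (tendsto_exp_neg_rpow_neg_nhdsGT_zero hα)
      (fun t (ht : 0 < t) => (hasDerivAt_exp_neg_rpow_neg ht).congr_deriv
        (rpow_mul_kendallDensity ht).symm)
      (fun t (ht : 0 < t) => mul_nonneg (rpow_nonneg ht.le _) (kendallDensity_nonneg ht hα.le))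
      (tendsto_exp_neg_rpow_neg_atTop hα)
    exact hint.trans (sub_zero 1)

theorem stmt16 (α : ℝ) (hα : 0 < α) (F G : ℝ → ℝ)
    (hF : ∀ x > 0, F x = (1 + x ^ (-α)) * Real.exp (-x ^ (-α)))
    (hG : ∀ x > 0, G x = ∫ t in Set.Ioc (0:ℝ) x,
      (1 - (t / x) ^ α) * (α * t ^ (-2 * α - 1) * Real.exp (-t ^ (-α)))) :
    (∀ x > 0, G x = Real.exp (-x ^ (-α))) ∧
    (∫ t in Set.Ioi (0:ℝ), t ^ α * (α * t ^ (-2 * α - 1) * Real.exp (-t ^ (-α)))) = 1 :=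
  stmt16_general α hα G hG
end

section
/- Let F(x)=(1+x^{-α})e^{-x^{-α}} for x>0 with Williamson transform G(x)=e^{-x^{-α}}, and let R(x)=2/(1-G(x))-(1-F(x))/(1-G(x))^2. Then x^α(x^{-α}R(x)-2) → 1/2 as x→∞. -/
open MeasureTheory Filter Topology Real Set

-- second-order Taylor limit
lemma La : Tendsto (fun t : ℝ => (Real.exp (-t) - 1 + t) / t ^ 2) (𝓝[>] 0) (𝓝 (1/2)) := by
  have h0 : Tendsto (fun t : ℝ => (Real.exp (-t) - 1 + t) / t ^ 2 - 1/2) (𝓝[>] 0) (𝓝 0) := by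
    refine squeeze_zero_norm' (a := fun t : ℝ => (2/9) * t) ?_ ?_
    · filter_upwards [Ioo_mem_nhdsGT_of_mem (by norm_num : (0:ℝ) ∈ Ico 0 1)] with t ht
      obtain ⟨ht0, ht1⟩ := ht
      have hb := Real.exp_bound (x := -t) (by rw [abs_neg, abs_of_pos ht0]; linarith) (by norm_num : 0 < 3)
      have hs : ∑ i ∈ Finset.range 3, (-t) ^ i / (Nat.factorial i : ℝ) = 1 - t + t^2/2 := by
        simp [Finset.sum_range_succ, Nat.factorial]; ring
      rw [hs] at hb
      have hb' : |Real.exp (-t) - (1 - t + t^2/2)| ≤ (2/9) * t^3 := by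
        calc |Real.exp (-t) - (1 - t + t^2/2)| ≤ |(-t)| ^ 3 * ((3:ℕ).succ / ((Nat.factorial 3 : ℝ) * 3)) := hb
        _ = (2/9) * t^3 := by rw [abs_neg, abs_of_pos ht0]; norm_num [Nat.factorial]; ring
      have ht2 : (0:ℝ) < t^2 := by positivity
      have : (Real.exp (-t) - 1 + t) / t ^ 2 - 1/2 = (Real.exp (-t) - (1 - t + t^2/2)) / t^2 := by
        field_simp; ring
      rw [Real.norm_eq_abs, this, abs_div, abs_of_pos ht2, div_le_iff₀ ht2]
      calc |Real.exp (-t) - (1 - t + t^2/2)| ≤ (2/9) * t^3 := hb'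
      _ = 2/9 * t * t^2 := by ring
    · have : Tendsto (fun t : ℝ => (2/9) * t) (𝓝 0) (𝓝 ((2/9) * 0)) :=
        (tendsto_id.const_mul _)
      simpa using this.mono_left nhdsWithin_le_nhds
  have := h0.add_const (1/2)
  simpa using this

lemma Lb : Tendsto (fun t : ℝ => (1 - Real.exp (-t)) / t) (𝓝[>] 0) (𝓝 1) := by
  have h : Tendsto (fun t : ℝ => 1 - t * ((Real.exp (-t) - 1 + t) / t ^ 2)) (𝓝[>] 0) (𝓝 (1 - 0 * (1/2))) := by
    exact (tendsto_const_nhds.sub (((tendsto_id.mono_left nhdsWithin_le_nhds)).mul La))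
  rw [show (1:ℝ) - 0 * (1/2) = 1 by norm_num] at h
  apply h.congr'
  filter_upwards [self_mem_nhdsWithin] with t (ht : 0 < t)
  field_simp
  ring

lemma Lc : Tendsto (fun t : ℝ => t / (1 - Real.exp (-t))) (𝓝[>] 0) (𝓝 1) := by
  have := Lb.inv₀ (by norm_num)
  simpa [inv_div] using this

lemma key : Tendsto (fun t : ℝ =>
    (t * (2 / (1 - Real.exp (-t)) - (1 - (1 + t) * Real.exp (-t)) / (1 - Real.exp (-t)) ^ 2) - 2) / t)
    (𝓝[>] 0) (𝓝 (1/2)) := by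
  have hphi : Tendsto (fun t : ℝ =>
      2 * ((Real.exp (-t) - 1 + t) / t ^ 2) * (t / (1 - Real.exp (-t)))
      - ((-( (Real.exp (-t) - 1 + t) / t ^ 2) + (1 - Real.exp (-t)) / t) * (t / (1 - Real.exp (-t))) ^ 2))
      (𝓝[>] 0) (𝓝 (2 * (1/2) * 1 - ((-(1/2) + 1) * 1 ^ 2))) := by
    exact (((tendsto_const_nhds.mul La).mul Lc).sub (((La.neg.add Lb)).mul (Lc.pow 2)))
  rw [show (2:ℝ) * (1/2) * 1 - ((-(1/2) + 1) * 1 ^ 2) = 1/2 by norm_num] at hphi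
  apply hphi.congr'
  filter_upwards [self_mem_nhdsWithin] with t (ht : 0 < t)
  have he : Real.exp (-t) < 1 := Real.exp_lt_one_iff.mpr (by linarith)
  have hs : (1 : ℝ) - Real.exp (-t) ≠ 0 := by linarith
  have ht' : t ≠ 0 := ne_of_gt ht
  field_simp
  ring

theorem stmt17 (α : ℝ) (hα : 0 < α) (F G R : ℝ → ℝ)
    (hF : ∀ x > 0, F x = (1 + x ^ (-α)) * Real.exp (-x ^ (-α)))
    (hG : ∀ x > 0, G x = Real.exp (-x ^ (-α)))
    (hR : ∀ x > 0, R x = 2 / (1 - G x) - (1 - F x) / (1 - G x) ^ 2) :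
    Tendsto (fun x => x ^ α * (x ^ (-α) * R x - 2)) atTop (𝓝 (1 / 2)) := by
  have hcomp : Tendsto (fun x : ℝ => x ^ (-α)) atTop (𝓝[>] 0) := by
    apply tendsto_nhdsWithin_of_tendsto_nhds_of_eventually_within
    · exact tendsto_rpow_neg_atTop hα
    · filter_upwards [eventually_gt_atTop (0:ℝ)] with x hx
      exact Real.rpow_pos_of_pos hx _
  have := key.comp hcomp
  apply this.congr'
  filter_upwards [eventually_gt_atTop (0:ℝ)] with x hx
  have ht : (0:ℝ) < x ^ (-α) := Real.rpow_pos_of_pos hx _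
  have hxa : x ^ α * x ^ (-α) = 1 := by
    rw [← Real.rpow_add hx]; simp
  have hinv : (x ^ (-α))⁻¹ = x ^ α := by
    field_simp [ne_of_gt ht] at hxa ⊢
    linarith [hxa]
  simp only [Function.comp]
  rw [hR x hx, hG x hx, hF x hx, div_eq_mul_inv, hinv]
  ring
end

section
/- Let X≥0 have continuous distribution function F with m(α)=E[X^α]∈(0,∞) for some α>0, and suppose that for a fixed y>0, x^{α+1}(F(x+y)-F(x))→0 as x→∞. Then the Kendall renewal function R(x)=2/(1-G(x))-(1-F(x))/(1-G(x))^2 satisfies (R(x+y)-R(x))/x^{α-1} → 2αy/m(α) as x→∞, where G is the Williamson transform of F with parameter α. -/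
/-!
With the truncated moment `S x = E[X ^ α; X ≤ x]`, the Williamson transform is
`G x = F x - S x / x ^ α`, so `x ^ α (1 - G x) = x ^ α (1 - F x) + S x → m(α)`, the first term
vanishing by Markov's inequality on the tail. Since `0 ≤ S (x + y) - S x ≤ (x + y) ^ α ΔF`, the
local tail condition gives `x ^ (α + 1) ΔG → α y m(α)`, the factor `α y` being the limit of
`x (1 - (x / (x + y)) ^ α)`. Written in these rescaled quantities, `(R (x + y) - R x) / x ^ (α - 1)`
is `2 x ^ (α + 1) ΔG / (x ^ α (1 - G x) · x ^ α (1 - G (x + y)))` plus terms carrying a factor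
`x ^ α (1 - F x)` or `x ^ (α + 1) ΔF`, which tend to `0`.
-/

open MeasureTheory Filter Topology Real Set

section Truncation

variable {Ω : Type*} [MeasurableSpace Ω] {μ : Measure Ω} {X : Ω → ℝ} {α x x' : ℝ}

theorem tendsto_setIntegral_le_atTop (hX : Measurable X) {f : Ω → ℝ} (hf : Integrable f μ) :
    Tendsto (fun x => ∫ ω in {ω | X ω ≤ x}, f ω ∂μ) atTop (𝓝 (∫ ω, f ω ∂μ)) := by
  have hmeas : ∀ x, MeasurableSet {ω | X ω ≤ x} := fun x => hX measurableSet_Iic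
  simp_rw [← integral_indicator (hmeas _)]
  refine tendsto_integral_filter_of_dominated_convergence (fun ω => ‖f ω‖)
    (Eventually.of_forall fun x => hf.aestronglyMeasurable.indicator (hmeas x))
    (Eventually.of_forall fun x => ae_of_all μ fun ω => norm_indicator_le_norm_self f ω)
    hf.norm (ae_of_all μ fun ω => tendsto_const_nhds.congr' ?_)
  filter_upwards [eventually_ge_atTop (X ω)] with x hx
  exact (indicator_of_mem (show ω ∈ {ω | X ω ≤ x} from hx) f).symm

variable [IsFiniteMeasure μ]

theorem rpow_mul_measureReal_lt_le_setIntegral (hX : Measurable X) (hα : 0 ≤ α) (hx : 0 ≤ x)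
    (hint : Integrable (fun ω => X ω ^ α) μ) :
    x ^ α * μ.real {ω | x < X ω} ≤ ∫ ω in {ω | x < X ω}, X ω ^ α ∂μ := by
  rw [mul_comm, ← smul_eq_mul, ← setIntegral_const]
  exact setIntegral_mono_on (integrable_const _) hint.integrableOn
    (measurableSet_lt measurable_const hX)
    fun ω (hω : x < X ω) => rpow_le_rpow hx hω.le hα

theorem tendsto_rpow_mul_measureReal_lt (hX : Measurable X) (hα : 0 ≤ α)
    (hint : Integrable (fun ω => X ω ^ α) μ) :
    Tendsto (fun x => x ^ α * μ.real {ω | x < X ω}) atTop (𝓝 0) := by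
  have htail : Tendsto (fun x => ∫ ω in {ω | x < X ω}, X ω ^ α ∂μ) atTop (𝓝 0) := by
    have h := (tendsto_const_nhds (x := ∫ ω, X ω ^ α ∂μ)).sub
      (tendsto_setIntegral_le_atTop hX hint)
    rw [sub_self] at h
    refine h.congr fun x => ?_
    have hcompl : {ω | X ω ≤ x}ᶜ = {ω | x < X ω} := by ext; simp
    rw [← hcompl, ← integral_add_compl (s := {ω | X ω ≤ x}) (hX measurableSet_Iic) hint,
      add_sub_cancel_left]
  refine squeeze_zero' ?_ ?_ htail
  · filter_upwards [eventually_ge_atTop 0] with x hx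
    positivity
  · filter_upwards [eventually_ge_atTop 0] with x hx
    exact rpow_mul_measureReal_lt_le_setIntegral hX hα hx hint

theorem sub_setIntegral_rpow_mem_Icc (hX : Measurable X) (hα : 0 ≤ α) (hx : 0 ≤ x)
    (hxx' : x ≤ x') (hint : Integrable (fun ω => X ω ^ α) μ) :
    (∫ ω in {ω | X ω ≤ x'}, X ω ^ α ∂μ) - ∫ ω in {ω | X ω ≤ x}, X ω ^ α ∂μ ∈
      Icc 0 (x' ^ α * (μ.real {ω | X ω ≤ x'} - μ.real {ω | X ω ≤ x})) := by
  have hsub : {ω | X ω ≤ x} ⊆ {ω | X ω ≤ x'} := fun ω (h : X ω ≤ x) => h.trans hxx'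
  have hmeas : MeasurableSet {ω | X ω ≤ x} := hX measurableSet_Iic
  have hD : MeasurableSet ({ω | X ω ≤ x'} \ {ω | X ω ≤ x}) :=
    (hX measurableSet_Iic).diff hmeas
  rw [← setIntegral_sdiff hmeas hint.integrableOn hsub, ← measureReal_sdiff hsub hmeas]
  have hmem : ∀ ω ∈ {ω | X ω ≤ x'} \ {ω | X ω ≤ x}, 0 ≤ X ω ∧ X ω ≤ x' :=
    fun ω ⟨h', h⟩ => ⟨hx.trans (not_le.mp h).le, h'⟩
  constructor
  · exact setIntegral_nonneg hD fun ω hω => rpow_nonneg (hmem ω hω).1 α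
  · calc _ ≤ ∫ ω in {ω | X ω ≤ x'} \ {ω | X ω ≤ x}, x' ^ α ∂μ :=
          setIntegral_mono_on hint.integrableOn (integrableOn_const (by finiteness)) hD
            fun ω hω => rpow_le_rpow (hmem ω hω).1 (hmem ω hω).2 hα
      _ = _ := by rw [setIntegral_const, smul_eq_mul, mul_comm]

theorem setIntegral_one_sub_div_rpow (hXnn : ∀ ω, 0 ≤ X ω)
    (hint : Integrable (fun ω => X ω ^ α) μ) (hx : 0 ≤ x) :
    ∫ ω in {ω | X ω ≤ x}, (1 - (X ω / x) ^ α) ∂μ =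
      μ.real {ω | X ω ≤ x} - (∫ ω in {ω | X ω ≤ x}, X ω ^ α ∂μ) / x ^ α := by
  simp_rw [div_rpow (hXnn _) hx]
  rw [integral_sub (integrable_const 1) (hint.div_const _).integrableOn,
    integral_div, setIntegral_const, smul_eq_mul, mul_one]

end Truncation

theorem tendsto_mul_one_sub_div_add_rpow (α y : ℝ) :
    Tendsto (fun x => x * (1 - (x / (x + y)) ^ α)) atTop (𝓝 (α * y)) := by
  have hderiv : HasDerivAt (fun t : ℝ => (1 + y * t) ^ (-α)) (-(α * y)) 0 := by
    have h := (((hasDerivAt_id (0 : ℝ)).const_mul y).const_add 1).rpow_const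
      (p := -α) (Or.inl (by simp))
    simpa [mul_comm] using h
  have hslope := (hderiv.tendsto_slope_zero_right.comp tendsto_inv_atTop_nhdsGT_zero).neg
  rw [neg_neg] at hslope
  refine hslope.congr' ?_
  filter_upwards [eventually_gt_atTop 0, eventually_gt_atTop (-y)] with x hx hxy
  have hxy' : 0 < x + y := by linarith
  have hratio : (x / (x + y)) ^ α = (1 + y * x⁻¹) ^ (-α) := by
    have hbase : 1 + y * x⁻¹ = (x / (x + y))⁻¹ := by field_simp
    rw [hbase, rpow_neg (by positivity), inv_rpow (by positivity), inv_inv]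
  simp only [Function.comp_apply, smul_eq_mul, zero_add, mul_zero, add_zero, one_rpow, inv_inv,
    hratio]
  ring

theorem kendall_sub_div_eq {p x u u' v v' : ℝ} (hp : p ≠ 0) (hx : x ≠ 0) (hu : u ≠ 0)
    (hu' : u' ≠ 0) :
    (2 / u' - v' / u' ^ 2 - (2 / u - v / u ^ 2)) / (p / x) =
      2 * (p * x * (u - u')) / (p * u * (p * u')) + p * x * (v - v') / (p * u') ^ 2
        - p * v * (p * x * (u - u')) * (p * u + p * u') / ((p * u) ^ 2 * (p * u') ^ 2) := by
  field_simp
  ring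

section Williamson

variable {F S G : ℝ → ℝ} {α y m : ℝ}

theorem tendsto_rpow_mul_one_sub_of_eq_sub_div
    (hG : ∀ x > 0, G x = F x - S x / x ^ α) (hS : Tendsto S atTop (𝓝 m))
    (hF : Tendsto (fun x => x ^ α * (1 - F x)) atTop (𝓝 0)) :
    Tendsto (fun x => x ^ α * (1 - G x)) atTop (𝓝 m) := by
  have h := hF.add hS
  rw [zero_add] at h
  refine h.congr' ?_
  filter_upwards [eventually_gt_atTop 0] with x hx
  rw [hG x hx]
  field_simp
  ring

theorem tendsto_rpow_mul_sub_of_eq_sub_div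
    (hG : ∀ x > 0, G x = F x - S x / x ^ α) (hS : Tendsto S atTop (𝓝 m))
    (hSinc : ∀ᶠ x in atTop, S (x + y) - S x ∈ Icc 0 ((x + y) ^ α * (F (x + y) - F x)))
    (hF : Tendsto (fun x => x ^ (α + 1) * (F (x + y) - F x)) atTop (𝓝 0)) :
    Tendsto (fun x => x ^ (α + 1) * (G (x + y) - G x)) atTop (𝓝 (α * y * m)) := by
  have hpos : ∀ᶠ x in atTop, 0 < x ∧ 0 < x + y := by
    filter_upwards [eventually_gt_atTop 0, eventually_gt_atTop (-y)] with x hx hxy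
    exact ⟨hx, by linarith⟩
  have hSterm : Tendsto (fun x => x ^ (α + 1) * (S (x + y) - S x) / (x + y) ^ α)
      atTop (𝓝 0) := by
    refine squeeze_zero' ?_ ?_ hF
    · filter_upwards [hSinc, hpos] with x ⟨hlo, _⟩ ⟨hx, hxy⟩
      positivity
    · filter_upwards [hSinc, hpos] with x ⟨_, hhi⟩ ⟨hx, hxy⟩
      rw [div_le_iff₀ (by positivity), mul_assoc, mul_comm (F _ - _)]
      exact mul_le_mul_of_nonneg_left hhi (by positivity)
  have h := (hF.add ((tendsto_mul_one_sub_div_add_rpow α y).mul hS)).sub hSterm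
  rw [zero_add, sub_zero] at h
  refine h.congr' ?_
  filter_upwards [hpos] with x ⟨hx, hxy⟩
  rw [hG x hx, hG (x + y) hxy, rpow_add hx, rpow_one, div_rpow hx.le hxy.le]
  field_simp
  ring

theorem tendsto_kendall_sub_div {R : ℝ → ℝ} (hm : m ≠ 0)
    (hG : ∀ x > 0, G x = F x - S x / x ^ α)
    (hR : ∀ x > 0, R x = 2 / (1 - G x) - (1 - F x) / (1 - G x) ^ 2)
    (hS : Tendsto S atTop (𝓝 m))
    (hSinc : ∀ᶠ x in atTop, S (x + y) - S x ∈ Icc 0 ((x + y) ^ α * (F (x + y) - F x)))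
    (hFtail : Tendsto (fun x => x ^ α * (1 - F x)) atTop (𝓝 0))
    (hF : Tendsto (fun x => x ^ (α + 1) * (F (x + y) - F x)) atTop (𝓝 0)) :
    Tendsto (fun x => (R (x + y) - R x) / x ^ (α - 1)) atTop (𝓝 (2 * α * y / m)) := by
  have hA := tendsto_rpow_mul_one_sub_of_eq_sub_div hG hS hFtail
  have hC := tendsto_rpow_mul_sub_of_eq_sub_div hG hS hSinc hF
  have hA' : Tendsto (fun x => x ^ α * (1 - G (x + y))) atTop (𝓝 m) := by
    have h := hA.sub (hC.div_atTop tendsto_id)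
    rw [sub_zero] at h
    refine h.congr' ?_
    filter_upwards [eventually_gt_atTop 0] with x hx
    rw [id, rpow_add hx, rpow_one]
    field_simp
    ring
  have hlim := ((hC.const_mul 2).div (hA.mul hA') (mul_ne_zero hm hm)).add
    (hF.div (hA'.pow 2) (pow_ne_zero 2 hm)) |>.sub
    (((hFtail.mul hC).mul (hA.add hA')).div ((hA.pow 2).mul (hA'.pow 2))
      (mul_ne_zero (pow_ne_zero 2 hm) (pow_ne_zero 2 hm)))
  convert hlim.congr' ?_ using 2
  · field_simp
    ring
  filter_upwards [eventually_gt_atTop 0, eventually_gt_atTop (-y), hA.eventually_ne hm,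
    hA'.eventually_ne hm] with x hx hxy hAx hA'x
  have hxy' : 0 < x + y := by linarith
  simp only [Pi.div_apply]
  rw [hR x hx, hR (x + y) hxy', rpow_sub_one hx.ne',
    kendall_sub_div_eq (rpow_pos_of_pos hx α).ne' hx.ne' (right_ne_zero_of_mul hAx)
      (right_ne_zero_of_mul hA'x), rpow_add hx, rpow_one]
  ring

end Williamson

theorem stmt18_general {Ω : Type*} [MeasurableSpace Ω] (μ : Measure Ω) [IsProbabilityMeasure μ]
    (X : Ω → ℝ) (hX : Measurable X) (hXnn : ∀ ω, 0 ≤ X ω)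
    (α : ℝ) (hα : 0 < α)
    (hint : Integrable (fun ω => X ω ^ α) μ)
    (hm : 0 < ∫ ω, X ω ^ α ∂μ)
    (F G R : ℝ → ℝ)
    (hF : ∀ x, F x = (μ {ω | X ω ≤ x}).toReal)
    (hG : ∀ x > 0, G x = ∫ ω in {ω | X ω ≤ x}, (1 - (X ω / x) ^ α) ∂μ)
    (hR : ∀ x > 0, R x = 2 / (1 - G x) - (1 - F x) / (1 - G x) ^ 2)
    (y : ℝ) (hy : 0 < y)
    (htail : Tendsto (fun x => x ^ (α + 1) * (F (x + y) - F x)) atTop (𝓝 0)) :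
    Tendsto (fun x => (R (x + y) - R x) / x ^ (α - 1)) atTop
      (𝓝 (2 * α * y / ∫ ω, X ω ^ α ∂μ)) := by
  have hF' : ∀ x, F x = μ.real {ω | X ω ≤ x} := hF
  have hF_compl : ∀ x, 1 - F x = μ.real {ω | x < X ω} := fun x => by
    rw [hF', ← probReal_compl_eq_one_sub (s := {ω | X ω ≤ x}) (hX measurableSet_Iic)]
    congr 1
    ext
    simp
  refine tendsto_kendall_sub_div hm.ne' (S := fun x => ∫ ω in {ω | X ω ≤ x}, X ω ^ α ∂μ)
    (fun x hx => ?_) hR (tendsto_setIntegral_le_atTop hX hint) ?_ ?_ htail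
  · rw [hG x hx, setIntegral_one_sub_div_rpow hXnn hint hx.le, hF']
  · filter_upwards [eventually_ge_atTop 0] with x hx
    rw [hF', hF']
    exact sub_setIntegral_rpow_mem_Icc hX hα.le hx (by linarith) hint
  · simpa only [hF_compl] using tendsto_rpow_mul_measureReal_lt hX hα.le hint

theorem stmt18 {Ω : Type*} [MeasurableSpace Ω] (μ : Measure Ω) [IsProbabilityMeasure μ]
    (X : Ω → ℝ) (hX : Measurable X) (hXnn : ∀ ω, 0 ≤ X ω)
    (α : ℝ) (hα : 0 < α)
    (hint : Integrable (fun ω => X ω ^ α) μ)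
    (hm : 0 < ∫ ω, X ω ^ α ∂μ)
    (F G R : ℝ → ℝ)
    (hF : ∀ x, F x = (μ {ω | X ω ≤ x}).toReal)
    (hFc : Continuous F)
    (hG : ∀ x > 0, G x = ∫ ω in {ω | X ω ≤ x}, (1 - (X ω / x) ^ α) ∂μ)
    (hR : ∀ x > 0, R x = 2 / (1 - G x) - (1 - F x) / (1 - G x) ^ 2)
    (y : ℝ) (hy : 0 < y)
    (htail : Tendsto (fun x => x ^ (α + 1) * (F (x + y) - F x)) atTop (𝓝 0)) :
    Tendsto (fun x => (R (x + y) - R x) / x ^ (α - 1)) atTop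
      (𝓝 (2 * α * y / ∫ ω, X ω ^ α ∂μ)) :=
  stmt18_general μ X hX hXnn α hα hint hm F G R hF hG hR y hy htail
end

section
/- Let X≥0 have distribution function F with continuous density f, let α>0 with m(α)=E[X^α]∈(0,∞), and let R(x)=2/(1-G(x))-(1-F(x))/(1-G(x))^2 with G the Williamson transform of F. If additionally x^{α+1}f(x)→0 as x→∞, then x^{1-α}R'(x) → 2α/m(α) as x→∞. -/
open MeasureTheory Filter Topology Real Set

/-!
Write `H x = ∫₀ˣ t^α f(t) dt`. Since `(t/x)^α = x^{-α} t^α`, we get `G = F - x^{-α} H`, hence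
`G' = α x^{-α-1} H` and `x^α (1 - G x) = x^α (1 - F x) + H x`. The tail term satisfies
`x^α (1 - F x) = x^α ∫ₓ^∞ f ≤ ∫ₓ^∞ t^α f → 0`, so `x^α (1 - G x) → m(α)`. Multiplied by
`x^{1-α}`, the quotient-rule formula for `R'` becomes a rational expression in `H x`,
`x^α (1 - F x)`, `x^α (1 - G x)` and `x^{α+1} f x`, whose limit is `2α m(α) / m(α)^2`.
-/

section Tail

variable {f : ℝ → ℝ} {α : ℝ}

theorem rpow_mul_integral_Ioi_le (hα : 0 ≤ α) (hf : ∀ t, 0 ≤ f t) {x : ℝ} (hx : 0 ≤ x)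
    (hfi : IntegrableOn f (Ioi x)) (hgi : IntegrableOn (fun t => t ^ α * f t) (Ioi x)) :
    x ^ α * ∫ t in Ioi x, f t ≤ ∫ t in Ioi x, t ^ α * f t := by
  rw [← integral_const_mul]
  refine setIntegral_mono_on (hfi.const_mul _) hgi measurableSet_Ioi fun t ht => ?_
  exact mul_le_mul_of_nonneg_right (rpow_le_rpow hx (le_of_lt ht) hα) (hf t)

theorem tendsto_rpow_mul_integral_Ioi_zero (hα : 0 ≤ α) (hf : ∀ t, 0 ≤ f t)
    (hfi : IntegrableOn f (Ioi 0)) (hgi : IntegrableOn (fun t => t ^ α * f t) (Ioi 0)) :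
    Tendsto (fun x => x ^ α * ∫ t in Ioi x, f t) atTop (𝓝 0) := by
  refine squeeze_zero' ?_ ?_
    (tendsto_integral_Ioi_zero (f := fun t => t ^ α * f t) (μ := volume) tendsto_id)
  · filter_upwards [eventually_ge_atTop 0] with x hx
    exact mul_nonneg (rpow_nonneg hx α) (setIntegral_nonneg measurableSet_Ioi fun t _ => hf t)
  · filter_upwards [eventually_ge_atTop 0] with x hx
    exact rpow_mul_integral_Ioi_le hα hf hx (hfi.mono_set (Ioi_subset_Ioi hx))
      (hgi.mono_set (Ioi_subset_Ioi hx))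

theorem tendsto_rpow_mul_sub_zero_of_hasDerivAt {F : ℝ → ℝ} {l : ℝ} (hα : 0 ≤ α)
    (hf : ∀ t, 0 ≤ f t) (hFd : ∀ x, HasDerivAt F (f x) x) (hF : Tendsto F atTop (𝓝 l))
    (hgi : IntegrableOn (fun t => t ^ α * f t) (Ioi 0)) :
    Tendsto (fun x => x ^ α * (l - F x)) atTop (𝓝 0) := by
  have hfi := integrableOn_Ioi_deriv_of_nonneg' (a := 0) (fun x _ => hFd x) (fun x _ => hf x) hF
  refine (tendsto_rpow_mul_integral_Ioi_zero hα hf hfi hgi).congr fun x => ?_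
  rw [integral_Ioi_of_hasDerivAt_of_nonneg' (fun y _ => hFd y) (fun y _ => hf y) hF]

end Tail

theorem hasDerivAt_two_div_sub_div_sq {F G : ℝ → ℝ} {F' G' x : ℝ} (hF : HasDerivAt F F' x)
    (hG : HasDerivAt G G' x) (hGx : 1 - G x ≠ 0) :
    HasDerivAt (fun y => 2 / (1 - G y) - (1 - F y) / (1 - G y) ^ 2)
      ((2 * G' + F') / (1 - G x) ^ 2 - 2 * (1 - F x) * G' / (1 - G x) ^ 3) x := by
  have h := ((hasDerivAt_const x 2).fun_div (hG.const_sub 1) hGx).sub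
    ((hF.const_sub 1).fun_div ((hG.const_sub 1).fun_pow 2) (pow_ne_zero 2 hGx))
  refine h.congr_deriv ?_
  field_simp
  ring

noncomputable section Williamson

/-- `G` of the paper, for the distribution with density `f`. -/
def williamsonTransform (α : ℝ) (f : ℝ → ℝ) (x : ℝ) : ℝ :=
  ∫ t in (0:ℝ)..x, (1 - (t / x) ^ α) * f t

/-- `H_α` of the paper. -/
def partialMoment (α : ℝ) (f : ℝ → ℝ) (x : ℝ) : ℝ :=
  ∫ t in (0:ℝ)..x, t ^ α * f t

variable {f : ℝ → ℝ} {α x : ℝ}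

theorem hasDerivAt_partialMoment (hα : 0 ≤ α) (hf : Continuous f) (x : ℝ) :
    HasDerivAt (partialMoment α f) (x ^ α * f x) x :=
  (((continuous_rpow_const hα).mul hf).integral_hasStrictDerivAt 0 x).hasDerivAt

theorem williamsonTransform_eq (hα : 0 ≤ α) (hf : Continuous f) (hx : 0 < x) :
    williamsonTransform α f x = (∫ t in (0:ℝ)..x, f t) - x ^ (-α) * partialMoment α f x := by
  have hgi : IntervalIntegrable (fun t => x ^ (-α) * (t ^ α * f t)) volume 0 x :=
    (continuous_const.mul ((continuous_rpow_const hα).mul hf)).intervalIntegrable _ _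
  rw [williamsonTransform, partialMoment, ← intervalIntegral.integral_const_mul,
    ← intervalIntegral.integral_sub (hf.intervalIntegrable _ _) hgi]
  refine intervalIntegral.integral_congr fun t ht => ?_
  rw [uIcc_of_le hx.le] at ht
  simp only [div_rpow ht.1 hx.le, rpow_neg hx.le]
  field_simp

theorem rpow_mul_one_sub_williamsonTransform (hα : 0 ≤ α) (hf : Continuous f) (hx : 0 < x) :
    x ^ α * (1 - williamsonTransform α f x)
      = x ^ α * (1 - ∫ t in (0:ℝ)..x, f t) + partialMoment α f x := by
  rw [williamsonTransform_eq hα hf hx, rpow_neg hx.le]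
  field_simp
  ring

theorem hasDerivAt_williamsonTransform (hα : 0 ≤ α) (hf : Continuous f) (hx : 0 < x) :
    HasDerivAt (williamsonTransform α f) (α * x ^ (-α - 1) * partialMoment α f x) x := by
  have hev : williamsonTransform α f =ᶠ[𝓝 x]
      fun y => (∫ t in (0:ℝ)..y, f t) - y ^ (-α) * partialMoment α f y :=
    eventually_of_mem (Ioi_mem_nhds hx) fun y hy => williamsonTransform_eq hα hf hy
  have h := (hf.integral_hasStrictDerivAt 0 x).hasDerivAt.sub
    ((Real.hasDerivAt_rpow_const (p := -α) (Or.inl hx.ne')).mul (hasDerivAt_partialMoment hα hf x))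
  refine (h.congr_of_eventuallyEq hev).congr_deriv ?_
  rw [rpow_neg hx.le, inv_mul_cancel_left₀ (rpow_pos_of_pos hx α).ne']
  ring

theorem rpow_one_sub_mul_deriv_eq {F G R : ℝ → ℝ} (hα : 0 ≤ α) (hf : Continuous f)
    (hFd : HasDerivAt F (f x) x) (hG : ∀ y > 0, G y = williamsonTransform α f y)
    (hR : ∀ y > 0, R y = 2 / (1 - G y) - (1 - F y) / (1 - G y) ^ 2) (hx : 0 < x)
    (hGx : 1 - G x ≠ 0) :
    x ^ (1 - α) * deriv R x
      = (2 * α * partialMoment α f x + x ^ (α + 1) * f x) / (x ^ α * (1 - G x)) ^ 2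
        - 2 * α * (x ^ α * (1 - F x)) * partialMoment α f x / (x ^ α * (1 - G x)) ^ 3 := by
  have hGd := (hasDerivAt_williamsonTransform hα hf hx).congr_of_eventuallyEq
    (eventually_of_mem (Ioi_mem_nhds hx) hG)
  have hRd := (hasDerivAt_two_div_sub_div_sq hFd hGd hGx).congr_of_eventuallyEq
    (eventually_of_mem (Ioi_mem_nhds hx) hR)
  rw [hRd.deriv, sub_eq_add_neg (-α), rpow_add hx, sub_eq_add_neg 1, rpow_add hx, rpow_add hx,
    rpow_neg hx.le, rpow_neg_one, rpow_one]
  have := (rpow_pos_of_pos hx α).ne'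
  field_simp

end Williamson

theorem stmt19_general (α : ℝ) (hα : 0 < α) (f F G R : ℝ → ℝ)
    (hf_cont : Continuous f) (hf_nn : ∀ x, 0 ≤ f x)
    (hFdef : ∀ x, F x = ∫ t in (0:ℝ)..x, f t)
    (hFlim : Tendsto F atTop (𝓝 1))
    (hint : IntegrableOn (fun t => t ^ α * f t) (Set.Ioi 0))
    (hm : 0 < ∫ t in Set.Ioi (0:ℝ), t ^ α * f t)
    (hG : ∀ x > 0, G x = ∫ t in (0:ℝ)..x, (1 - (t / x) ^ α) * f t)
    (hR : ∀ x > 0, R x = 2 / (1 - G x) - (1 - F x) / (1 - G x) ^ 2)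
    (hft : Tendsto (fun x => x ^ (α + 1) * f x) atTop (𝓝 0)) :
    Tendsto (fun x => x ^ (1 - α) * deriv R x) atTop
      (𝓝 (2 * α / ∫ t in Set.Ioi (0:ℝ), t ^ α * f t)) := by
  set m := ∫ t in Set.Ioi (0:ℝ), t ^ α * f t
  have hFd (x : ℝ) : HasDerivAt F (f x) x := by
    simpa only [← funext hFdef] using (hf_cont.integral_hasStrictDerivAt 0 x).hasDerivAt
  have hH : Tendsto (partialMoment α f) atTop (𝓝 m) :=
    intervalIntegral_tendsto_integral_Ioi 0 hint tendsto_id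
  have hF_tail : Tendsto (fun x => x ^ α * (1 - F x)) atTop (𝓝 0) :=
    tendsto_rpow_mul_sub_zero_of_hasDerivAt hα.le hf_nn hFd hFlim hint
  have hG_tail : Tendsto (fun x => x ^ α * (1 - G x)) atTop (𝓝 m) := by
    have hsum := hF_tail.add hH
    rw [zero_add] at hsum
    refine hsum.congr' ?_
    filter_upwards [eventually_gt_atTop 0] with x hx
    rw [hG x hx, hFdef, ← rpow_mul_one_sub_williamsonTransform hα.le hf_cont hx]
    rfl
  have hG_lt_one : ∀ᶠ x in atTop, 0 < 1 - G x := by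
    filter_upwards [hG_tail.eventually (eventually_gt_nhds hm), eventually_gt_atTop 0]
      with x hxG hx
    exact pos_of_mul_pos_right hxG (rpow_nonneg hx.le α)
  have hlim : Tendsto (fun x =>
      (2 * α * partialMoment α f x + x ^ (α + 1) * f x) / (x ^ α * (1 - G x)) ^ 2
        - 2 * α * (x ^ α * (1 - F x)) * partialMoment α f x / (x ^ α * (1 - G x)) ^ 3)
      atTop (𝓝 (2 * α / m)) := by
    have h := (((hH.const_mul (2 * α)).add hft).div (hG_tail.pow 2) (pow_ne_zero 2 hm.ne')).sub
      (((hF_tail.const_mul (2 * α)).mul hH).div (hG_tail.pow 3) (pow_ne_zero 3 hm.ne'))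
    rwa [show (2 * α * m + 0) / m ^ 2 - 2 * α * 0 * m / m ^ 3 = 2 * α / m by field_simp; ring]
      at h
  refine hlim.congr' ?_
  filter_upwards [eventually_gt_atTop 0, hG_lt_one] with x hx hGx
  exact (rpow_one_sub_mul_deriv_eq hα.le hf_cont (hFd x) hG hR hx hGx.ne').symm

theorem stmt19 (α : ℝ) (hα : 0 < α) (f F G R : ℝ → ℝ)
    (hf_cont : Continuous f) (hf_nn : ∀ x, 0 ≤ f x)
    (hf0 : ∀ x ≤ (0:ℝ), f x = 0)
    (hFdef : ∀ x, F x = ∫ t in (0:ℝ)..x, f t)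
    (hFlim : Tendsto F atTop (𝓝 1))
    (hint : IntegrableOn (fun t => t ^ α * f t) (Set.Ioi 0))
    (hm : 0 < ∫ t in Set.Ioi (0:ℝ), t ^ α * f t)
    (hG : ∀ x > 0, G x = ∫ t in (0:ℝ)..x, (1 - (t / x) ^ α) * f t)
    (hR : ∀ x > 0, R x = 2 / (1 - G x) - (1 - F x) / (1 - G x) ^ 2)
    (hft : Tendsto (fun x => x ^ (α + 1) * f x) atTop (𝓝 0)) :
    Tendsto (fun x => x ^ (1 - α) * deriv R x) atTop
      (𝓝 (2 * α / ∫ t in Set.Ioi (0:ℝ), t ^ α * f t)) :=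
  stmt19_general α hα f F G R hf_cont hf_nn hFdef hFlim hint hm hG hR hft
end
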